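/- arXiv:2507.06464 — 5 statements merged into one kernel-verified Lean document; each statement's English description precedes it below -/
import Mathlib

section
/- Let 0 ≤ β₁ < 1, 0 ≤ β₂ < 1 with β₁² < β₂, let t ≥ 1, and let g₁,…,g_t be real numbers not all zero. Define m = (1-β₁)/(1-β₁ᵗ) · Σ_{k=1}^t β₁^{t-k} g_k and v = (1-β₂)/(1-β₂ᵗ) · Σ_{k=1}^t β₂^{t-k} g_k². Then |m|/√v ≤ (1-β₁)·√(1-β₂ᵗ)·√(1-(β₁²/β₂)ᵗ) / ((1-β₁ᵗ)·√(1-β₂)·√(1-β₁²/β₂)). -/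
theorem adam_update_bound
    (β₁ β₂ : ℝ) (hβ₁0 : 0 ≤ β₁) (hβ₁1 : β₁ < 1) (hβ₂0 : 0 ≤ β₂) (hβ₂1 : β₂ < 1)
    (h12 : β₁ ^ 2 < β₂) (t : ℕ) (ht : 1 ≤ t) (g : ℕ → ℝ)
    (hg : ∃ k ∈ Finset.Icc 1 t, g k ≠ 0) :
    |(1 - β₁) / (1 - β₁ ^ t) * ∑ k ∈ Finset.Icc 1 t, β₁ ^ (t - k) * g k| /
      Real.sqrt ((1 - β₂) / (1 - β₂ ^ t) * ∑ k ∈ Finset.Icc 1 t, β₂ ^ (t - k) * g k ^ 2)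
    ≤ (1 - β₁) * Real.sqrt (1 - β₂ ^ t) * Real.sqrt (1 - (β₁ ^ 2 / β₂) ^ t) /
      ((1 - β₁ ^ t) * Real.sqrt (1 - β₂) * Real.sqrt (1 - β₁ ^ 2 / β₂)) := by
  have hβ₂pos : 0 < β₂ := lt_of_le_of_lt (sq_nonneg β₁) h12
  set r : ℝ := β₁ ^ 2 / β₂ with hr
  have hr0 : 0 ≤ r := div_nonneg (sq_nonneg β₁) hβ₂pos.le
  have hr1 : r < 1 := (div_lt_one hβ₂pos).2 h12
  have htne : t ≠ 0 := by omega
  have h1t : 0 < 1 - β₁ ^ t := by have := pow_lt_one₀ hβ₁0 hβ₁1 htne; linarith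
  have h2t : 0 < 1 - β₂ ^ t := by have := pow_lt_one₀ hβ₂0 hβ₂1 htne; linarith
  have hrt : 0 < 1 - r ^ t := by have := pow_lt_one₀ hr0 hr1 htne; linarith
  have h1 : 0 < 1 - β₁ := by linarith
  have h2 : 0 < 1 - β₂ := by linarith
  have hr1' : 0 < 1 - r := by linarith
  set S1 : ℝ := ∑ k ∈ Finset.Icc 1 t, β₁ ^ (t - k) * g k with hS1
  set S2 : ℝ := ∑ k ∈ Finset.Icc 1 t, β₂ ^ (t - k) * g k ^ 2 with hS2
  have hS2pos : 0 < S2 := by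
    obtain ⟨k, hk, hgk⟩ := hg
    refine Finset.sum_pos' (fun i _ => by positivity) ⟨k, hk, ?_⟩
    have : 0 < g k ^ 2 := by positivity
    positivity
  -- geometric sum
  have hgeom : ∑ k ∈ Finset.Icc 1 t, r ^ (t - k) = (1 - r ^ t) / (1 - r) := by
    have : ∑ k ∈ Finset.Icc 1 t, r ^ (t - k) = ∑ j ∈ Finset.range t, r ^ j := by
      refine Finset.sum_nbij' (fun k => t - k) (fun j => t - j) ?_ ?_ ?_ ?_ ?_
      · intro a ha; simp only [Finset.mem_Icc] at ha; simp only [Finset.mem_range]; omega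
      · intro a ha; simp only [Finset.mem_range] at ha; simp only [Finset.mem_Icc]; omega
      · intro a ha; simp only [Finset.mem_Icc] at ha; show t - (t - a) = a; omega
      · intro a ha; simp only [Finset.mem_range] at ha; show t - (t - a) = a; omega
      · intro a _; rfl
    rw [this, geom_sum_eq (ne_of_lt hr1)]
    rw [div_eq_div_iff (by linarith) (by linarith)]
    ring
  -- Cauchy-Schwarz
  have hcs : S1 ^ 2 ≤ ((1 - r ^ t) / (1 - r)) * S2 := by
    have key := Finset.sum_mul_sq_le_sq_mul_sq (Finset.Icc 1 t)
      (fun k => Real.sqrt r ^ (t - k)) (fun k => Real.sqrt β₂ ^ (t - k) * g k)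
    have h1' : ∀ k, Real.sqrt r ^ (t - k) * (Real.sqrt β₂ ^ (t - k) * g k)
        = β₁ ^ (t - k) * g k := by
      intro k
      have : Real.sqrt r * Real.sqrt β₂ = β₁ := by
        rw [← Real.sqrt_mul hr0, hr, div_mul_cancel₀ _ hβ₂pos.ne', Real.sqrt_sq hβ₁0]
      rw [← mul_assoc, ← mul_pow, this]
    have h2' : ∀ k, (Real.sqrt r ^ (t - k)) ^ 2 = r ^ (t - k) := by
      intro k; rw [← pow_mul, mul_comm (t - k) 2, pow_mul, Real.sq_sqrt hr0]
    have h3' : ∀ k, (Real.sqrt β₂ ^ (t - k) * g k) ^ 2 = β₂ ^ (t - k) * g k ^ 2 := by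
      intro k
      rw [mul_pow, ← pow_mul, mul_comm (t - k) 2, pow_mul, Real.sq_sqrt hβ₂pos.le]
    simp only [h1', h2', h3'] at key
    rwa [hgeom] at key
  have hS1le : |S1| ≤ Real.sqrt ((1 - r ^ t) / (1 - r)) * Real.sqrt S2 := by
    rw [← Real.sqrt_mul (by positivity)]
    rw [← Real.sqrt_sq_eq_abs]
    exact Real.sqrt_le_sqrt hcs
  -- rewrite both sides
  have hLHS : |(1 - β₁) / (1 - β₁ ^ t) * S1| /
      Real.sqrt ((1 - β₂) / (1 - β₂ ^ t) * S2)
      = (1 - β₁) / (1 - β₁ ^ t) * |S1| /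
        (Real.sqrt ((1 - β₂) / (1 - β₂ ^ t)) * Real.sqrt S2) := by
    rw [abs_mul, abs_of_pos (by positivity), Real.sqrt_mul (by positivity)]
  rw [hLHS]
  have hsqS2 : 0 < Real.sqrt S2 := Real.sqrt_pos.2 hS2pos
  have hsqc2 : 0 < Real.sqrt ((1 - β₂) / (1 - β₂ ^ t)) := Real.sqrt_pos.2 (by positivity)
  have step : (1 - β₁) / (1 - β₁ ^ t) * |S1| /
        (Real.sqrt ((1 - β₂) / (1 - β₂ ^ t)) * Real.sqrt S2)
      ≤ (1 - β₁) / (1 - β₁ ^ t) * Real.sqrt ((1 - r ^ t) / (1 - r)) /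
        Real.sqrt ((1 - β₂) / (1 - β₂ ^ t)) := by
    rw [div_le_div_iff₀ (by positivity) hsqc2]
    calc (1 - β₁) / (1 - β₁ ^ t) * |S1| * Real.sqrt ((1 - β₂) / (1 - β₂ ^ t))
        ≤ (1 - β₁) / (1 - β₁ ^ t) * (Real.sqrt ((1 - r ^ t) / (1 - r)) * Real.sqrt S2)
            * Real.sqrt ((1 - β₂) / (1 - β₂ ^ t)) := by
          gcongr
      _ = (1 - β₁) / (1 - β₁ ^ t) * Real.sqrt ((1 - r ^ t) / (1 - r)) *
            (Real.sqrt ((1 - β₂) / (1 - β₂ ^ t)) * Real.sqrt S2) := by ring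
  refine step.trans_eq ?_
  have e1 : Real.sqrt ((1 - r ^ t) / (1 - r)) = Real.sqrt (1 - r ^ t) / Real.sqrt (1 - r) :=
    Real.sqrt_div hrt.le _
  have e2 : Real.sqrt ((1 - β₂) / (1 - β₂ ^ t)) = Real.sqrt (1 - β₂) / Real.sqrt (1 - β₂ ^ t) :=
    Real.sqrt_div h2.le _
  have p1 : (0:ℝ) < Real.sqrt (1 - r) := Real.sqrt_pos.2 hr1'
  have p2 : (0:ℝ) < Real.sqrt (1 - β₂) := Real.sqrt_pos.2 h2
  have p3 : (0:ℝ) < Real.sqrt (1 - β₂ ^ t) := Real.sqrt_pos.2 h2t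
  rw [e1, e2]
  field_simp
end

section
/- Let 0 ≤ β₁ < 1, 0 ≤ β₂ < 1, p ≥ 1, q > 1 with 1/p + 1/q = 1, and suppose β₁ < β₂^{1/p}. Let t ≥ 1 and g₁,…,g_t real numbers not all zero. Define n = (1-β₁)(Σ_{k=1}^t β₁^{t-k+1} g_k + g_t) and b = ((1-β₂)(Σ_{k=1}^t β₂^{t-k+1} |g_k|^p + |g_t|^p))^{1/p}. Then |n|/b ≤ (1-β₁) / ((1-β₂)^{1/p} · (1 - β₁^q/β₂^{q/p})^{1/q}). -/
/-!
Write `β₁ ^ j = (β₁ / c) ^ j * c ^ j` with `c = β₂ ^ (1 / p)`, so that `c ^ (j p) = β₂ ^ j`.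
Hölder's inequality bounds `|∑ β₁ ^ j g|` by `(∑ β₂ ^ j |g| ^ p) ^ (1 / p)` times the `ℓ^q` norm
of `((β₁ / c) ^ j)_j`, whose `q`-th power is a partial geometric series with ratio
`β₁ ^ q / β₂ ^ (q / p) < 1`, hence at most `(1 - β₁ ^ q / β₂ ^ (q / p))⁻¹`.
-/

open Finset

theorem Real.HolderConjugate.of_one_div_add_one_div {p q : ℝ} (hq : 1 < q)
    (hpq : 1 / p + 1 / q = 1) : p.HolderConjugate q := by
  have hq0 : 0 < q := zero_lt_one.trans hq
  have hinvq : 1 / q < 1 := (div_lt_one hq0).2 hq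
  exact ⟨by simpa only [one_div, inv_one] using hpq, one_div_pos.1 (by linarith), hq0⟩

theorem abs_sum_pow_mul_le_holder {ι : Type*} (s : Finset ι) (m : ι → ℕ) (x : ι → ℝ)
    {p q a b : ℝ} (hpq : p.HolderConjugate q) (ha : 0 ≤ a) (hb : 0 < b) :
    |∑ i ∈ s, a ^ m i * x i| ≤
      (∑ i ∈ s, b ^ m i * |x i| ^ p) ^ (1 / p) *
        (∑ i ∈ s, (a ^ q / b ^ (q / p)) ^ m i) ^ (1 / q) := by
  set c := b ^ (1 / p)
  have hc : 0 < c := by positivity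
  have hcp : ∀ n : ℕ, (c ^ n) ^ p = b ^ n := fun n => by
    rw [← Real.rpow_pow_comm hc.le, ← Real.rpow_mul hb.le, one_div_mul_cancel hpq.ne_zero,
      Real.rpow_one]
  have hacq : ∀ n : ℕ, ((a / c) ^ n) ^ q = (a ^ q / b ^ (q / p)) ^ n := fun n => by
    rw [← Real.rpow_pow_comm (by positivity), Real.div_rpow ha hc.le, ← Real.rpow_mul hb.le,
      one_div_mul_eq_div]
  have hsplit : ∀ n : ℕ, c ^ n * (a / c) ^ n = a ^ n := fun n => by
    rw [← mul_pow, mul_div_cancel₀ _ hc.ne']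
  calc |∑ i ∈ s, a ^ m i * x i|
      ≤ ∑ i ∈ s, c ^ m i * |x i| * (a / c) ^ m i := by
        refine (abs_sum_le_sum_abs _ _).trans_eq (sum_congr rfl fun i _ => ?_)
        rw [abs_mul, abs_pow, abs_of_nonneg ha, ← hsplit]
        ring
    _ ≤ (∑ i ∈ s, (c ^ m i * |x i|) ^ p) ^ (1 / p) * (∑ i ∈ s, ((a / c) ^ m i) ^ q) ^ (1 / q) :=
        Real.inner_le_Lp_mul_Lq_of_nonneg s hpq (fun i _ => by positivity)
          (fun i _ => by positivity)
    _ = _ := by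
        simp only [Real.mul_rpow (pow_nonneg hc.le _) (abs_nonneg _), hcp, hacq]

theorem sum_pow_le_inv_one_sub {ι : Type*} (s : Finset ι) {m : ι → ℕ} (hm : Set.InjOn m s)
    {r : ℝ} (h0 : 0 ≤ r) (h1 : r < 1) : ∑ i ∈ s, r ^ m i ≤ (1 - r)⁻¹ := by
  classical
  rw [← sum_image hm, ← tsum_geometric_of_lt_one h0 h1]
  exact (summable_geometric_of_lt_one h0 h1).sum_le_tsum _ fun n _ => pow_nonneg h0 n

/-- The top term, with exponent `0`, becomes the index `t + 1`. -/
theorem sum_Icc_add_eq_sum_Icc_succ {M : Type*} [AddCommMonoid M] (t : ℕ) (F : ℕ → ℝ → M)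
    (g : ℕ → ℝ) :
    ∑ k ∈ Icc 1 t, F (t - k + 1) (g k) + F 0 (g t) =
      ∑ k ∈ Icc 1 (t + 1), F (t + 1 - k) (g (min k t)) := by
  rw [sum_Icc_succ_top (by omega), Nat.sub_self, min_eq_right (by omega)]
  congr 1
  refine sum_congr rfl fun k hk => ?_
  rw [min_eq_left (mem_Icc.1 hk).2, Nat.sub_add_comm (mem_Icc.1 hk).2]

theorem rpow_div_rpow_div_lt_one {a b p q : ℝ} (ha : 0 ≤ a) (hb : 0 ≤ b) (hq : 0 < q)
    (hab : a < b ^ (1 / p)) : a ^ q / b ^ (q / p) < 1 := by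
  have hbq : 0 < b ^ (q / p) := by
    rw [← one_div_mul_eq_div, Real.rpow_mul hb]
    exact Real.rpow_pos_of_pos (ha.trans_lt hab) q
  rw [div_lt_one hbq, ← one_div_mul_eq_div, Real.rpow_mul hb]
  exact Real.rpow_lt_rpow ha hab hq

theorem abs_sum_pow_mul_add_le {p q a b : ℝ} (hpq : p.HolderConjugate q) (ha : 0 ≤ a)
    (hb : 0 < b) (hr : a ^ q / b ^ (q / p) < 1) (t : ℕ) (g : ℕ → ℝ) :
    |∑ k ∈ Icc 1 t, a ^ (t - k + 1) * g k + g t| ≤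
      (∑ k ∈ Icc 1 t, b ^ (t - k + 1) * |g k| ^ p + |g t| ^ p) ^ (1 / p) *
        (1 - a ^ q / b ^ (q / p))⁻¹ ^ (1 / q) := by
  have hsum := sum_Icc_add_eq_sum_Icc_succ t (fun j y => a ^ j * y) g
  have hsum_pow := sum_Icc_add_eq_sum_Icc_succ t (fun j y => b ^ j * |y| ^ p) g
  simp only [pow_zero, one_mul] at hsum hsum_pow
  have hinj : Set.InjOn (fun k => t + 1 - k) (Icc 1 (t + 1) : Set ℕ) := by
    intro i hi j hj hij
    simp only [coe_Icc, Set.mem_Icc] at hi hj hij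
    omega
  rw [hsum, hsum_pow]
  refine (abs_sum_pow_mul_le_holder _ _ _ hpq ha hb).trans ?_
  have hq : 0 < q := hpq.symm.pos
  gcongr
  exact sum_pow_le_inv_one_sub _ hinj (by positivity) hr

theorem s3_update_bound_general
    (β₁ β₂ p q : ℝ) (hβ₁0 : 0 ≤ β₁) (hβ₂0 : 0 ≤ β₂) (hβ₂1 : β₂ < 1)
    (hq : 1 < q) (hpq : 1 / p + 1 / q = 1)
    (hββ : β₁ < β₂ ^ (1 / p)) (t : ℕ) (g : ℕ → ℝ) :
    |(1 - β₁) * ((∑ k ∈ Finset.Icc 1 t, β₁ ^ (t - k + 1) * g k) + g t)| /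
      ((1 - β₂) * ((∑ k ∈ Finset.Icc 1 t, β₂ ^ (t - k + 1) * |g k| ^ p) + |g t| ^ p)) ^ (1 / p)
    ≤ (1 - β₁) / ((1 - β₂) ^ (1 / p) * (1 - β₁ ^ q / β₂ ^ (q / p)) ^ (1 / q)) := by
  have hconj := Real.HolderConjugate.of_one_div_add_one_div hq hpq
  have hp : 0 < 1 / p := one_div_pos.2 hconj.pos
  have hβ₂ : 0 < β₂ := hβ₂0.lt_of_ne <| by
    rintro rfl
    rw [Real.zero_rpow hp.ne'] at hββ
    linarith
  have hβ₁1 : β₁ < 1 := hββ.trans_le (Real.rpow_le_one hβ₂0 hβ₂1.le hp.le)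
  have hr := rpow_div_rpow_div_lt_one hβ₁0 hβ₂0 hconj.symm.pos hββ
  have hN := abs_sum_pow_mul_add_le hconj hβ₁0 hβ₂ hr t g
  rw [Real.inv_rpow (sub_nonneg.2 hr.le)] at hN
  set N := (∑ k ∈ Icc 1 t, β₁ ^ (t - k + 1) * g k) + g t
  set D := (∑ k ∈ Icc 1 t, β₂ ^ (t - k + 1) * |g k| ^ p) + |g t| ^ p
  set r := β₁ ^ q / β₂ ^ (q / p)
  have hD : 0 ≤ D := by positivity
  have hc : 0 ≤ (1 - β₁) / (1 - β₂) ^ (1 / p) :=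
    div_nonneg (sub_nonneg.2 hβ₁1.le) (Real.rpow_nonneg (sub_nonneg.2 hβ₂1.le) _)
  calc |(1 - β₁) * N| / ((1 - β₂) * D) ^ (1 / p)
      = (1 - β₁) / (1 - β₂) ^ (1 / p) * (|N| / D ^ (1 / p)) := by
        rw [abs_mul, abs_of_pos (by linarith), Real.mul_rpow (by linarith) hD, mul_div_mul_comm]
    _ ≤ (1 - β₁) / (1 - β₂) ^ (1 / p) * ((1 - r) ^ (1 / q))⁻¹ := by
        gcongr
        -- also covers `D = 0`, where `|N| / 0 = 0`
        exact div_le_of_le_mul₀ (by positivity) (by positivity) (by rwa [mul_comm])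
    _ = (1 - β₁) / ((1 - β₂) ^ (1 / p) * (1 - r) ^ (1 / q)) := by
        rw [← div_eq_mul_inv, div_div]

theorem s3_update_bound
    (β₁ β₂ p q : ℝ) (hβ₁0 : 0 ≤ β₁) (hβ₁1 : β₁ < 1) (hβ₂0 : 0 ≤ β₂) (hβ₂1 : β₂ < 1)
    (hp : 1 ≤ p) (hq : 1 < q) (hpq : 1 / p + 1 / q = 1)
    (hββ : β₁ < β₂ ^ (1 / p)) (t : ℕ) (ht : 1 ≤ t) (g : ℕ → ℝ)
    (hg : ∃ k ∈ Finset.Icc 1 t, g k ≠ 0) :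
    |(1 - β₁) * ((∑ k ∈ Finset.Icc 1 t, β₁ ^ (t - k + 1) * g k) + g t)| /
      ((1 - β₂) * ((∑ k ∈ Finset.Icc 1 t, β₂ ^ (t - k + 1) * |g k| ^ p) + |g t| ^ p)) ^ (1 / p)
    ≤ (1 - β₁) / ((1 - β₂) ^ (1 / p) * (1 - β₁ ^ q / β₂ ^ (q / p)) ^ (1 / q)) :=
  s3_update_bound_general β₁ β₂ p q hβ₁0 hβ₂0 hβ₂1 hq hpq hββ t g
end

section
/- Let 0 < β₁ < 1, 0 < β₂ < 1, p > 1, q > 1 with 1/p + 1/q = 1 and β₁ < β₂^{1/p}. Then the quantity B(β₁,β₂) := (1-β₁) / ((1-β₂)^{1/p} · (1 - β₁^q/β₂^{q/p})^{1/q}) satisfies B(β₁,β₂) ≥ 1, with equality if and only if β₁ = β₂. -/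
open Real

/-- Strict two-term weighted AM-GM for positive `a ≠ b`. -/
lemma amgm2_strict {w₁ w₂ a b : ℝ} (hw₁ : 0 < w₁) (hw₂ : 0 < w₂) (hw : w₁ + w₂ = 1)
    (ha : 0 < a) (hb : 0 < b) (hab : a ≠ b) : a ^ w₁ * b ^ w₂ < w₁ * a + w₂ * b := by
  have h := strictConcaveOn_log_Ioi.2 (Set.mem_Ioi.2 ha) (Set.mem_Ioi.2 hb) hab hw₁ hw₂ hw
  simp only [smul_eq_mul] at h
  have hpos : 0 < w₁ * a + w₂ * b := by positivity
  calc a ^ w₁ * b ^ w₂ = exp (w₁ * log a + w₂ * log b) := by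
        rw [exp_add, rpow_def_of_pos ha, rpow_def_of_pos hb, mul_comm (log a), mul_comm (log b)]
    _ < exp (log (w₁ * a + w₂ * b)) := exp_lt_exp.2 h
    _ = w₁ * a + w₂ * b := exp_log hpos

theorem s3_bound_ge_one_iff
    (β₁ β₂ p q : ℝ) (hβ₁0 : 0 < β₁) (hβ₁1 : β₁ < 1) (hβ₂0 : 0 < β₂) (hβ₂1 : β₂ < 1)
    (hp : 1 < p) (hq : 1 < q) (hpq : 1 / p + 1 / q = 1)
    (hββ : β₁ < β₂ ^ (1 / p)) :
    1 ≤ (1 - β₁) / ((1 - β₂) ^ (1 / p) * (1 - β₁ ^ q / β₂ ^ (q / p)) ^ (1 / q)) ∧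
    ((1 - β₁) / ((1 - β₂) ^ (1 / p) * (1 - β₁ ^ q / β₂ ^ (q / p)) ^ (1 / q)) = 1 ↔ β₁ = β₂) := by
  have hp0 : (0:ℝ) < p := by linarith
  have hq0 : (0:ℝ) < q := by linarith
  have hp0' : p ≠ 0 := ne_of_gt hp0
  have hq0' : q ≠ 0 := ne_of_gt hq0
  have hqp : q / p = q - 1 := by
    rw [div_eq_iff hp0']
    field_simp at hpq
    nlinarith [hpq]
  set c := β₁ ^ q / β₂ ^ (q / p) with hc_def
  have hβ₂p : 0 < β₂ ^ (q / p) := rpow_pos_of_pos hβ₂0 _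
  have hc0 : 0 < c := div_pos (rpow_pos_of_pos hβ₁0 q) hβ₂p
  have hc1 : c < 1 := by
    rw [hc_def, div_lt_one hβ₂p]
    calc β₁ ^ q < (β₂ ^ (1 / p)) ^ q :=
          Real.rpow_lt_rpow hβ₁0.le hββ hq0
      _ = β₂ ^ (q / p) := by
          rw [← Real.rpow_mul hβ₂0.le, one_div_mul_eq_div]
  have hcq : c ^ (1 / q) = β₁ / β₂ ^ (1 / p) := by
    rw [hc_def, Real.div_rpow (rpow_pos_of_pos hβ₁0 q).le hβ₂p.le,
      ← Real.rpow_mul hβ₁0.le, ← Real.rpow_mul hβ₂0.le,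
      mul_one_div_cancel hq0', rpow_one]
    congr 1
    rw [div_mul_div_comm, mul_comm p q, mul_div_mul_left _ _ hq0']
  have hkey : β₂ ^ (1 / p) * c ^ (1 / q) = β₁ := by
    rw [hcq, mul_div_cancel₀ _ (ne_of_gt (rpow_pos_of_pos hβ₂0 (1 / p)))]
  have hw₁ : (0:ℝ) < 1 / p := by positivity
  have hw₂ : (0:ℝ) < 1 / q := by positivity
  have young2 : β₁ ≤ (1 / p) * β₂ + (1 / q) * c := by
    rw [← hkey]
    exact Real.geom_mean_le_arith_mean2_weighted hw₁.le hw₂.le hβ₂0.le hc0.le hpq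
  have h1β₂ : (0:ℝ) < 1 - β₂ := by linarith
  have h1c : (0:ℝ) < 1 - c := by linarith
  have young1 : (1 - β₂) ^ (1 / p) * (1 - c) ^ (1 / q)
      ≤ (1 / p) * (1 - β₂) + (1 / q) * (1 - c) :=
    Real.geom_mean_le_arith_mean2_weighted hw₁.le hw₂.le h1β₂.le h1c.le hpq
  have hsum : (1 / p) * (1 - β₂) + (1 / q) * (1 - c)
      = 1 - ((1 / p) * β₂ + (1 / q) * c) := by linear_combination hpq
  have hD0 : 0 < (1 - β₂) ^ (1 / p) * (1 - c) ^ (1 / q) :=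
    mul_pos (rpow_pos_of_pos h1β₂ _) (rpow_pos_of_pos h1c _)
  have hDle : (1 - β₂) ^ (1 / p) * (1 - c) ^ (1 / q) ≤ 1 - β₁ := by
    rw [hsum] at young1; linarith
  -- β₂ = c ↔ β₁ = β₂
  have hpow_inj : β₁ ^ q = β₂ ^ q → β₁ = β₂ := by
    intro h
    rcases lt_trichotomy β₁ β₂ with hlt | heq | hgt
    · exact absurd h (ne_of_lt (Real.rpow_lt_rpow hβ₁0.le hlt hq0))
    · exact heq
    · exact absurd h.symm (ne_of_lt (Real.rpow_lt_rpow hβ₂0.le hgt hq0))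
  have hmul : ∀ x : ℝ, 0 < x → x ^ q = x * x ^ (q / p) := by
    intro x hx
    have hqe : q = 1 + q / p := by rw [hqp]; ring
    nth_rewrite 1 [hqe]
    rw [Real.rpow_add hx, rpow_one]
  have hcβ₂ : c = β₂ → β₁ = β₂ := by
    intro h
    apply hpow_inj
    rw [hc_def, div_eq_iff (ne_of_gt hβ₂p)] at h
    rw [h, ← hmul β₂ hβ₂0]
  constructor
  · rw [le_div_iff₀ hD0, one_mul]; exact hDle
  · rw [div_eq_one_iff_eq (ne_of_gt hD0)]
    constructor
    · intro h
      by_contra hne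
      rcases eq_or_ne c β₂ with hcc | hcc
      · exact hne (hcβ₂ hcc)
      · have hab : 1 - β₂ ≠ 1 - c := fun hh => hcc (by linarith)
        have hstrict := amgm2_strict hw₁ hw₂ hpq h1β₂ h1c hab
        rw [hsum] at hstrict
        linarith
    · intro h
      subst h
      have hcc : c = β₁ := by
        rw [hc_def, div_eq_iff (ne_of_gt hβ₂p), hmul β₁ hβ₁0]
      rw [hcc, ← Real.rpow_add (by linarith : (0:ℝ) < 1 - β₁) ,  hpq, rpow_one]
end

section
/- Let 0 ≤ β < 1 and let (g_t)_{t≥1} be a sequence in ℝ^d with g₀ = 0. Define m_t = β m_{t-1} + (1-β) g_t with m₀ = 0, r_t = β r_{t-1} + (1-β)(g_t − g_{t-1}) with r₀ = 0, and n_t = β m_t + (1-β) g_t. Then for all t ≥ 1, n_t = m_t + β r_t. -/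
theorem nag_II_equiv_nag_III
    (d : ℕ) (β : ℝ) (hβ0 : 0 ≤ β) (hβ1 : β < 1)
    (g m r : ℕ → EuclideanSpace ℝ (Fin d))
    (hg0 : g 0 = 0) (hm0 : m 0 = 0) (hr0 : r 0 = 0)
    (hm : ∀ t, 1 ≤ t → m t = β • m (t - 1) + (1 - β) • g t)
    (hr : ∀ t, 1 ≤ t → r t = β • r (t - 1) + (1 - β) • (g t - g (t - 1))) :
    ∀ t, 1 ≤ t → β • m t + (1 - β) • g t = m t + β • r t := by
  have key : ∀ t, β • r t = (1 - β) • (g t - m t) := by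
    intro t
    induction t with
    | zero => simp [hr0, hg0, hm0]
    | succ n ih =>
      rw [hr (n + 1) (by omega), hm (n + 1) (by omega)]
      simp only [Nat.add_sub_cancel]
      linear_combination (norm := module) β • ih
  intro t _
  rw [key t]; module
end

section
/- Let F : ℝ^d → ℝ be differentiable and satisfy the generalized smoothness descent inequality F(y) ≤ F(x) + ⟨∇F(x), y−x⟩ + ((L₀ + L₁‖∇F(x)‖₂)/2)‖y−x‖₂² for relevant x, y. Let γ > 0, u ∈ ℝ^d with 0 < u_min ≤ u_j ≤ 1 for all j, n ∈ ℝ^d, and define x⁺ = x − γ (u ∘ sign(n)) (coordinatewise product and sign). Then F(x⁺) ≤ F(x) − γ u_min ‖∇F(x)‖₁ + 2γ√d ‖n − ∇F(x)‖₂ + (γ² d (L₀ + L₁‖∇F(x)‖₁))/2. -/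
/-!
Plug the step `-γ (u ∘ sign n)` into the descent inequality. In the first-order term, a
coordinate where `sign nⱼ` agrees with `sign ∇ⱼF` contributes `-uⱼ |∇ⱼF|`, and one where it
disagrees has `|nⱼ - ∇ⱼF| ≥ |∇ⱼF|`, so the loss is at most `2 |nⱼ - ∇ⱼF|`; summing and comparing
`ℓ¹` with `ℓ²` gives the noise term. The quadratic term uses `‖u ∘ sign n‖² ≤ d` and
`‖∇F‖₂ ≤ ‖∇F‖₁`.
-/

open Finset

namespace Real

theorem mul_sign_self (a : ℝ) : a * sign a = |a| := by
  rcases lt_trichotomy a 0 with ha | rfl | ha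
  · rw [sign_of_neg ha, abs_of_neg ha, mul_neg_one]
  · simp
  · rw [sign_of_pos ha, abs_of_pos ha, mul_one]

theorem mul_sign_sub_sign_le (a b : ℝ) : a * (sign a - sign b) ≤ 2 * |a - b| := by
  have h₁ := le_abs_self (a - b)
  have h₂ := neg_abs_le (a - b)
  rcases lt_trichotomy a 0 with ha | rfl | ha <;>
    rcases lt_trichotomy b 0 with hb | rfl | hb <;>
    simp only [sign_of_neg, sign_of_pos, sign_zero, *] <;> linarith

theorem neg_mul_mul_sign_le {a b u umin : ℝ} (h₀ : 0 ≤ u) (hmin : umin ≤ u) (h₁ : u ≤ 1) :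
    -(a * (u * sign b)) ≤ -(umin * |a|) + 2 * |a - b| := by
  have hdisc := mul_le_mul_of_nonneg_left (mul_sign_sub_sign_le a b) h₀
  calc -(a * (u * sign b)) = -(u * (a * sign a)) + u * (a * (sign a - sign b)) := by ring
    _ ≤ -(u * |a|) + u * (2 * |a - b|) := by rw [mul_sign_self]; linarith
    _ ≤ -(umin * |a|) + 2 * |a - b| :=
      add_le_add (neg_le_neg (mul_le_mul_of_nonneg_right hmin (abs_nonneg a)))
        (mul_le_of_le_one_left (by positivity) h₁)

end Real

namespace EuclideanSpace

variable {ι : Type*} [Fintype ι]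

theorem norm_le_sum_abs (x : EuclideanSpace ℝ ι) : ‖x‖ ≤ ∑ i, |x i| := by
  refine le_of_pow_le_pow_left₀ two_ne_zero (sum_nonneg fun i _ => abs_nonneg _) ?_
  rw [real_norm_sq_eq]
  simpa only [sq_abs] using sum_sq_le_sq_sum_of_nonneg fun i _ => abs_nonneg (x i)

theorem sum_abs_le_sqrt_card_mul_norm (x : EuclideanSpace ℝ ι) :
    ∑ i, |x i| ≤ √(Fintype.card ι) * ‖x‖ := by
  refine le_of_pow_le_pow_left₀ two_ne_zero (by positivity) ?_
  rw [mul_pow, Real.sq_sqrt (Nat.cast_nonneg _), real_norm_sq_eq]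
  simpa only [sq_abs, card_univ] using sq_sum_le_card_mul_sum_sq (s := univ) (f := fun i => |x i|)

theorem norm_sq_le_card_of_abs_le_one {x : EuclideanSpace ℝ ι} (hx : ∀ i, |x i| ≤ 1) :
    ‖x‖ ^ 2 ≤ Fintype.card ι := by
  rw [real_norm_sq_eq]
  calc ∑ i, x i ^ 2 ≤ ∑ _i : ι, (1 : ℝ) :=
        sum_le_sum fun i _ => (sq_le_one_iff_abs_le_one _).2 (hx i)
    _ = Fintype.card ι := by simp

theorem real_inner_eq_sum (x y : EuclideanSpace ℝ ι) : inner ℝ x y = ∑ i, x i * y i := by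
  simp [PiLp.inner_apply, mul_comm]

end EuclideanSpace

noncomputable def signStep {ι : Type*} (u n : EuclideanSpace ℝ ι) : EuclideanSpace ℝ ι :=
  WithLp.toLp 2 fun j => u j * Real.sign (n j)

section signStep

variable {ι : Type*} [Fintype ι]

theorem norm_sq_signStep_le {u : EuclideanSpace ℝ ι} (hu : ∀ j, 0 ≤ u j ∧ u j ≤ 1)
    (n : EuclideanSpace ℝ ι) : ‖signStep u n‖ ^ 2 ≤ Fintype.card ι := by
  refine EuclideanSpace.norm_sq_le_card_of_abs_le_one fun j => ?_
  have := hu j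
  rcases Real.sign_apply_eq (n j) with h | h | h <;>
    simp [signStep, h, abs_of_nonneg this.1, this.2]

theorem inner_signStep_ge {u : EuclideanSpace ℝ ι} {umin : ℝ} (humin : 0 ≤ umin)
    (hu : ∀ j, umin ≤ u j ∧ u j ≤ 1) (g n : EuclideanSpace ℝ ι) :
    umin * ∑ j, |g j| - 2 * √(Fintype.card ι) * ‖g - n‖ ≤ inner ℝ g (signStep u n) := by
  have hcoord : ∑ j, -(g j * (u j * Real.sign (n j))) ≤
      ∑ j, (-(umin * |g j|) + 2 * |g j - n j|) :=
    sum_le_sum fun j _ => Real.neg_mul_mul_sign_le (humin.trans (hu j).1) (hu j).1 (hu j).2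
  have hl1 := EuclideanSpace.sum_abs_le_sqrt_card_mul_norm (g - n)
  simp only [sum_add_distrib, sum_neg_distrib, ← mul_sum, PiLp.sub_apply] at hcoord hl1
  rw [EuclideanSpace.real_inner_eq_sum]
  change _ ≤ ∑ j, g j * (u j * Real.sign (n j))
  linarith

end signStep

theorem s3_one_step_descent_general
    (d : ℕ) (F : EuclideanSpace ℝ (Fin d) → ℝ)
    (L₀ L₁ : ℝ) (hL₀ : 0 ≤ L₀) (hL₁ : 0 ≤ L₁)
    (hdescent : ∀ x y : EuclideanSpace ℝ (Fin d),
      F y ≤ F x + (inner ℝ (gradient F x) (y - x) : ℝ) +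
        (L₀ + L₁ * ‖gradient F x‖) / 2 * ‖y - x‖ ^ 2)
    (γ : ℝ) (hγ : 0 < γ) (umin : ℝ) (humin : 0 < umin)
    (u n : EuclideanSpace ℝ (Fin d))
    (hu : ∀ j, umin ≤ u j ∧ u j ≤ 1)
    (x : EuclideanSpace ℝ (Fin d)) :
    F (x - γ • (WithLp.equiv 2 (Fin d → ℝ)).symm (fun j => u j * Real.sign (n j)))
      ≤ F x - γ * umin * (∑ j, |gradient F x j|)
        + 2 * γ * Real.sqrt d * ‖n - gradient F x‖
        + γ ^ 2 * d * (L₀ + L₁ * (∑ j, |gradient F x j|)) / 2 := by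
  change F (x - γ • signStep u n) ≤ _
  set g := gradient F x
  have hstep := hdescent x (x - γ • signStep u n)
  rw [sub_sub_cancel_left, inner_neg_right, real_inner_smul_right, norm_neg, norm_smul, mul_pow,
    Real.norm_eq_abs, sq_abs] at hstep
  have hinner := mul_le_mul_of_nonneg_left (inner_signStep_ge humin.le hu g n) hγ.le
  have hquad : (L₀ + L₁ * ‖g‖) / 2 * (γ ^ 2 * ‖signStep u n‖ ^ 2)
      ≤ (L₀ + L₁ * ∑ j, |g j|) / 2 * (γ ^ 2 * d) := by
    have hnorm := norm_sq_signStep_le (fun j => ⟨humin.le.trans (hu j).1, (hu j).2⟩) n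
    rw [Fintype.card_fin] at hnorm
    gcongr
    exact EuclideanSpace.norm_le_sum_abs g
  rw [Fintype.card_fin, norm_sub_rev] at hinner
  linarith

theorem s3_one_step_descent
    (d : ℕ) (hd : 1 ≤ d) (F : EuclideanSpace ℝ (Fin d) → ℝ) (hF : Differentiable ℝ F)
    (L₀ L₁ : ℝ) (hL₀ : 0 ≤ L₀) (hL₁ : 0 ≤ L₁)
    (hdescent : ∀ x y : EuclideanSpace ℝ (Fin d),
      F y ≤ F x + (inner ℝ (gradient F x) (y - x) : ℝ) +
        (L₀ + L₁ * ‖gradient F x‖) / 2 * ‖y - x‖ ^ 2)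
    (γ : ℝ) (hγ : 0 < γ) (umin : ℝ) (humin : 0 < umin)
    (u n : EuclideanSpace ℝ (Fin d))
    (hu : ∀ j, umin ≤ u j ∧ u j ≤ 1)
    (x : EuclideanSpace ℝ (Fin d)) :
    F (x - γ • (WithLp.equiv 2 (Fin d → ℝ)).symm (fun j => u j * Real.sign (n j)))
      ≤ F x - γ * umin * (∑ j, |gradient F x j|)
        + 2 * γ * Real.sqrt d * ‖n - gradient F x‖
        + γ ^ 2 * d * (L₀ + L₁ * (∑ j, |gradient F x j|)) / 2 :=
  s3_one_step_descent_general d F L₀ L₁ hL₀ hL₁ hdescent γ hγ umin humin u n hu x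
end
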